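/- Let k: ℝ^d × ℝ^d → ℝ satisfy (k(a,b) - k(c,d))² ≤ C·(‖a-c‖² + ‖b-d‖²) for all a,b,c,d and some constant C > 0. Let x₁,…,xₙ ∈ ℝ^d and let x̄₁,…,x̄ₙ ∈ ℝ^d satisfy ‖xᵢ - x̄ᵢ‖ < ε for all i. Let K and K̄ be the n×n matrices Kᵢⱼ = k(xᵢ,xⱼ)/n and K̄ᵢⱼ = k(x̄ᵢ,x̄ⱼ)/n, with eigenvalues λ₁ ≥ ⋯ ≥ λₙ and λ̄₁ ≥ ⋯ ≥ λ̄ₙ. Then ∑ᵢ (λᵢ - λ̄ᵢ)² ≤ 2Cε². -/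
import Mathlib

open Matrix Finset in
private theorem trace_mul_eig {n : ℕ} (A B : Matrix (Fin n) (Fin n) ℝ)
    (hA : A.IsHermitian) (hB : B.IsHermitian) :
    (A * B).trace = ∑ i, ∑ j, hA.eigenvalues i * hB.eigenvalues j *
      ((star (hA.eigenvectorUnitary : Matrix (Fin n) (Fin n) ℝ) *
        ((hB.eigenvectorUnitary : Matrix (Fin n) (Fin n) ℝ))) i j)^2 := by
  set U := (hA.eigenvectorUnitary : Matrix (Fin n) (Fin n) ℝ) with hUdef
  set V := (hB.eigenvectorUnitary : Matrix (Fin n) (Fin n) ℝ) with hVdef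
  have hUU : U * star U = 1 := (Matrix.mem_unitaryGroup_iff).mp hA.eigenvectorUnitary.2
  have hAe : A = U * diagonal hA.eigenvalues * star U := by
    have := hA.spectral_theorem; simpa using this
  have hBe : B = V * diagonal hB.eigenvalues * star V := by
    have := hB.spectral_theorem; simpa using this
  set W := star U * V with hWdef
  have key : A * B = U * (diagonal hA.eigenvalues * W * diagonal hB.eigenvalues * star W) * star U := by
    conv_lhs => rw [hAe, hBe]
    simp only [hWdef, Matrix.star_mul, star_star, Matrix.mul_assoc]
    rw [hUU, Matrix.mul_one]
  rw [key, Matrix.trace_mul_cycle, ← Matrix.mul_assoc,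
    (Matrix.mem_unitaryGroup_iff').mp hA.eigenvectorUnitary.2, Matrix.one_mul]
  have hsW : star W = Wᵀ := rfl
  rw [hsW]
  simp only [Matrix.trace, Matrix.diag, Matrix.mul_apply, Matrix.diagonal_apply,
    Matrix.transpose_apply, Finset.sum_mul, Finset.mul_sum, Finset.sum_ite_eq,
    Finset.mem_univ, if_true]
  congr 1; ext i; rw [Finset.sum_comm]
  exact Finset.sum_congr rfl fun j _ => by
    rw [Finset.sum_comm]
    simp [Finset.sum_ite_eq', Finset.sum_ite_eq]
    ring

open Matrix Finset in
/-- Hoffman–Wielandt inequality for real symmetric matrices with sorted eigenvalues. -/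
private theorem hoffman_wielandt {n : ℕ} (A B : Matrix (Fin n) (Fin n) ℝ)
    (hA : A.IsHermitian) (hB : B.IsHermitian)
    (lam lambar : Fin n → ℝ) (hlam : Antitone lam) (hlambar : Antitone lambar)
    (h1 : ∃ σ : Equiv.Perm (Fin n), lam = hA.eigenvalues ∘ σ)
    (h2 : ∃ σ : Equiv.Perm (Fin n), lambar = hB.eigenvalues ∘ σ) :
    ∑ i, (lam i - lambar i) ^ 2 ≤ ∑ i, ∑ j, (A i j - B i j) ^ 2 := by
  obtain ⟨σ₁, hσ₁⟩ := h1
  obtain ⟨σ₂, hσ₂⟩ := h2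
  set μ := hA.eigenvalues with hμdef
  set ν := hB.eigenvalues with hνdef
  set U := (hA.eigenvectorUnitary : Matrix (Fin n) (Fin n) ℝ) with hUdef
  set V := (hB.eigenvectorUnitary : Matrix (Fin n) (Fin n) ℝ) with hVdef
  set W := star U * V with hWdef
  set S : Matrix (Fin n) (Fin n) ℝ := fun i j => (W i j) ^ 2 with hSdef
  -- S is doubly stochastic
  have hWW : W * Wᵀ = 1 := by
    have hVV : V * star V = 1 := (Matrix.mem_unitaryGroup_iff).mp hB.eigenvectorUnitary.2
    have hUU : star U * U = 1 := (Matrix.mem_unitaryGroup_iff').mp hA.eigenvectorUnitary.2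
    have h : (Wᵀ : Matrix (Fin n) (Fin n) ℝ) = star W := rfl
    rw [h, hWdef]
    simp only [Matrix.star_mul, star_star, Matrix.mul_assoc]
    rw [← Matrix.mul_assoc V, hVV, Matrix.one_mul, hUU]
  have hWtW : Wᵀ * W = 1 := by
    have hVV : star V * V = 1 := (Matrix.mem_unitaryGroup_iff').mp hB.eigenvectorUnitary.2
    have hUU : U * star U = 1 := (Matrix.mem_unitaryGroup_iff).mp hA.eigenvectorUnitary.2
    have h : (Wᵀ : Matrix (Fin n) (Fin n) ℝ) = star W := rfl
    rw [h, hWdef]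
    simp only [Matrix.star_mul, star_star, Matrix.mul_assoc]
    rw [← Matrix.mul_assoc U, hUU, Matrix.one_mul, hVV]
  have hrow : ∀ i, ∑ j, S i j = 1 := by
    intro i
    have := Matrix.ext_iff.2 hWW i i
    simpa [hSdef, Matrix.mul_apply, Matrix.one_apply, pow_two] using this
  have hcol : ∀ j, ∑ i, S i j = 1 := by
    intro j
    have := Matrix.ext_iff.2 hWtW j j
    simpa [hSdef, Matrix.mul_apply, Matrix.one_apply, pow_two] using this
  have hS : S ∈ doublyStochastic ℝ (Fin n) := by
    rw [mem_doublyStochastic_iff_sum]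
    exact ⟨fun i j => sq_nonneg _, hrow, hcol⟩
  -- trace identities
  have tAB : (A * B).trace = ∑ i, ∑ j, μ i * ν j * S i j := trace_mul_eig A B hA hB
  have tAA : (A * A).trace = ∑ i, μ i ^ 2 := by
    have h2 := trace_mul_eig A A hA hA
    have h1 : star U * U = 1 := (Matrix.mem_unitaryGroup_iff').mp hA.eigenvectorUnitary.2
    rw [h1] at h2
    simpa [Matrix.one_apply, Finset.sum_ite_eq, pow_two] using h2
  have tBB : (B * B).trace = ∑ i, ν i ^ 2 := by
    have h2 := trace_mul_eig B B hB hB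
    have h1 : star V * V = 1 := (Matrix.mem_unitaryGroup_iff').mp hB.eigenvectorUnitary.2
    rw [h1] at h2
    simpa [Matrix.one_apply, Finset.sum_ite_eq, pow_two] using h2
  -- Frobenius distance equals weighted eigenvalue distance
  have hAsymm : ∀ i j, A j i = A i j := by
    intro i j
    have := Matrix.ext_iff.2 hA i j
    simpa [Matrix.conjTranspose_apply] using this
  have hBsymm : ∀ i j, B j i = B i j := by
    intro i j
    have := Matrix.ext_iff.2 hB i j
    simpa [Matrix.conjTranspose_apply] using this
  have hE : ∑ i, ∑ j, (A i j - B i j) ^ 2 = ∑ i, ∑ j, S i j * (μ i - ν j) ^ 2 := by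
    have e1 : ∑ i, ∑ j, (A i j - B i j) ^ 2
        = (A * A).trace + (B * B).trace - 2 * (A * B).trace := by
      simp only [Matrix.trace, Matrix.diag, Matrix.mul_apply]
      rw [Finset.mul_sum, ← Finset.sum_add_distrib, ← Finset.sum_sub_distrib]
      refine Finset.sum_congr rfl fun i _ => ?_
      rw [Finset.mul_sum, ← Finset.sum_add_distrib, ← Finset.sum_sub_distrib]
      refine Finset.sum_congr rfl fun j _ => ?_
      rw [hAsymm i j, hBsymm i j]
      ring
    have e2 : ∑ i, ∑ j, S i j * (μ i - ν j) ^ 2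
        = ∑ i, μ i ^ 2 + ∑ j, ν j ^ 2 - 2 * ∑ i, ∑ j, μ i * ν j * S i j := by
      have expand : ∀ i j, S i j * (μ i - ν j) ^ 2
          = μ i ^ 2 * S i j + ν j ^ 2 * S i j - 2 * (μ i * ν j * S i j) := by
        intro i j; ring
      simp only [expand, Finset.sum_sub_distrib, Finset.sum_add_distrib]
      rw [Finset.mul_sum]
      congr 1
      · congr 1
        · refine Finset.sum_congr rfl fun i _ => ?_
          rw [← Finset.mul_sum, hrow i, mul_one]
        · rw [Finset.sum_comm]
          refine Finset.sum_congr rfl fun j _ => ?_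
          rw [← Finset.mul_sum, hcol j, mul_one]
      · refine Finset.sum_congr rfl fun i _ => ?_
        rw [Finset.mul_sum]
    rw [e1, e2, tAA, tBB, tAB]
  -- per-permutation bound via rearrangement
  have hmono : Monovary lam lambar := by
    intro i j h
    refine hlam ?_
    by_contra hc
    push_neg at hc
    exact absurd (hlambar hc.le) (not_le.mpr h)
  have hperm : ∀ σ : Equiv.Perm (Fin n),
      ∑ i, (lam i - lambar i) ^ 2 ≤ ∑ i, (μ i - ν (σ i)) ^ 2 := by
    intro σ
    set π : Equiv.Perm (Fin n) := σ₂⁻¹ * (σ * σ₁) with hπdef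
    have reidx : ∑ i, (μ i - ν (σ i)) ^ 2 = ∑ t, (lam t - lambar (π t)) ^ 2 := by
      rw [← Equiv.sum_comp σ₁ (fun i => (μ i - ν (σ i)) ^ 2)]
      refine Finset.sum_congr rfl fun t _ => ?_
      have e1 : lam t = μ (σ₁ t) := by rw [hσ₁]; rfl
      have e2 : lambar (π t) = ν (σ (σ₁ t)) := by
        rw [hσ₂]
        simp [hπdef, Equiv.Perm.mul_apply]
      rw [e1, e2]
    rw [reidx]
    have hre : ∑ t, lam t * lambar (π t) ≤ ∑ t, lam t * lambar t := by
      have := hmono.sum_smul_comp_perm_le_sum_smul (σ := π)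
      simpa [smul_eq_mul] using this
    have hsq : ∑ t, lambar (π t) ^ 2 = ∑ t, lambar t ^ 2 :=
      Equiv.sum_comp π (fun t => lambar t ^ 2)
    have expand : ∀ (g : Fin n → ℝ) (t : Fin n), (lam t - g t) ^ 2
        = lam t ^ 2 + g t ^ 2 - 2 * (lam t * g t) := by intro g t; ring
    calc ∑ i, (lam i - lambar i) ^ 2
        = ∑ t, lam t ^ 2 + ∑ t, lambar t ^ 2 - 2 * ∑ t, lam t * lambar t := by
          simp only [expand fun t => lambar t, Finset.sum_sub_distrib,
            Finset.sum_add_distrib, Finset.mul_sum]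
      _ ≤ ∑ t, lam t ^ 2 + ∑ t, lambar (π t) ^ 2 - 2 * ∑ t, lam t * lambar (π t) := by
          rw [hsq]; linarith
      _ = ∑ t, (lam t - lambar (π t)) ^ 2 := by
          simp only [expand fun t => lambar (π t), Finset.sum_sub_distrib,
            Finset.sum_add_distrib, Finset.mul_sum]
  -- Birkhoff
  obtain ⟨w, hw0, hw1, hwS⟩ := exists_eq_sum_perm_of_mem_doublyStochastic hS
  have hSw : ∀ i j, S i j = ∑ σ : Equiv.Perm (Fin n), w σ * (σ.permMatrix ℝ) i j := by
    intro i j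
    have := Matrix.ext_iff.2 hwS i j
    rw [← this]
    simp only [Matrix.sum_apply, Matrix.smul_apply, smul_eq_mul]
  have hPσ : ∀ σ : Equiv.Perm (Fin n),
      ∑ i, ∑ j, (σ.permMatrix ℝ) i j * (μ i - ν j) ^ 2 = ∑ i, (μ i - ν (σ i)) ^ 2 := by
    intro σ
    refine Finset.sum_congr rfl fun i _ => ?_
    have h : ∀ j, (σ.permMatrix ℝ) i j = if j = σ i then 1 else 0 := by
      intro j
      simp [Equiv.Perm.permMatrix, PEquiv.toMatrix_apply, Equiv.toPEquiv_apply, eq_comm]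
    simp only [h, ite_mul, one_mul, zero_mul, Finset.sum_ite_eq', Finset.mem_univ, if_true]
  have hmain : ∑ i, ∑ j, S i j * (μ i - ν j) ^ 2
      = ∑ σ : Equiv.Perm (Fin n), w σ * ∑ i, (μ i - ν (σ i)) ^ 2 := by
    calc ∑ i, ∑ j, S i j * (μ i - ν j) ^ 2
        = ∑ i, ∑ j, ∑ σ : Equiv.Perm (Fin n), w σ * ((σ.permMatrix ℝ) i j * (μ i - ν j) ^ 2) := by
          simp only [hSw, Finset.sum_mul, mul_assoc]
      _ = ∑ i, ∑ σ : Equiv.Perm (Fin n), ∑ j, w σ * ((σ.permMatrix ℝ) i j * (μ i - ν j) ^ 2) :=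
          Finset.sum_congr rfl fun i _ => Finset.sum_comm
      _ = ∑ σ : Equiv.Perm (Fin n), ∑ i, ∑ j, w σ * ((σ.permMatrix ℝ) i j * (μ i - ν j) ^ 2) :=
          Finset.sum_comm
      _ = ∑ σ : Equiv.Perm (Fin n), w σ * ∑ i, ∑ j, (σ.permMatrix ℝ) i j * (μ i - ν j) ^ 2 := by
          simp only [← Finset.mul_sum]
      _ = ∑ σ : Equiv.Perm (Fin n), w σ * ∑ i, (μ i - ν (σ i)) ^ 2 := by
          simp only [hPσ]
  calc ∑ i, (lam i - lambar i) ^ 2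
      = ∑ σ : Equiv.Perm (Fin n), w σ * ∑ i, (lam i - lambar i) ^ 2 := by
        rw [← Finset.sum_mul, hw1, one_mul]
    _ ≤ ∑ σ : Equiv.Perm (Fin n), w σ * ∑ i, (μ i - ν (σ i)) ^ 2 :=
        Finset.sum_le_sum fun σ _ => mul_le_mul_of_nonneg_left (hperm σ) (hw0 σ)
    _ = ∑ i, ∑ j, S i j * (μ i - ν j) ^ 2 := hmain.symm
    _ = ∑ i, ∑ j, (A i j - B i j) ^ 2 := hE.symm

/-- Eigenvalue perturbation bound for quantized Gram matrices. -/
theorem gram_eigenvalue_quantization_bound (d n : ℕ) (C ε : ℝ) (hC : 0 < C)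
    (k : EuclideanSpace ℝ (Fin d) → EuclideanSpace ℝ (Fin d) → ℝ)
    (hprof : ∀ a b c e : EuclideanSpace ℝ (Fin d),
      (k a b - k c e) ^ 2 ≤ C * (‖a - c‖ ^ 2 + ‖b - e‖ ^ 2))
    (x xbar : Fin n → EuclideanSpace ℝ (Fin d))
    (hclose : ∀ i, ‖x i - xbar i‖ < ε)
    (K Kbar : Matrix (Fin n) (Fin n) ℝ)
    (hKdef : ∀ i j, K i j = k (x i) (x j) / n)
    (hKbardef : ∀ i j, Kbar i j = k (xbar i) (xbar j) / n)
    (hK : K.IsHermitian) (hKbar : Kbar.IsHermitian)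
    (lam lambar : Fin n → ℝ) (hlam : Antitone lam) (hlambar : Antitone lambar)
    (hlamK : ∃ σ : Equiv.Perm (Fin n), lam = hK.eigenvalues ∘ σ)
    (hlambarK : ∃ σ : Equiv.Perm (Fin n), lambar = hKbar.eigenvalues ∘ σ) :
    ∑ i, (lam i - lambar i) ^ 2 ≤ 2 * C * ε ^ 2 := by
  have hHW := hoffman_wielandt K Kbar hK hKbar lam lambar hlam hlambar hlamK hlambarK
  refine hHW.trans ?_
  rcases Nat.eq_zero_or_pos n with hn | hn
  · subst hn
    simp only [Finset.univ_eq_empty, Finset.sum_empty]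
    positivity
  have hnR : (0:ℝ) < n := by exact_mod_cast hn
  have hterm : ∀ i j : Fin n, (K i j - Kbar i j) ^ 2 ≤ 2 * C * ε ^ 2 / (n * n) := by
    intro i j
    have hsq : ∀ i : Fin n, ‖x i - xbar i‖ ^ 2 ≤ ε ^ 2 := fun i =>
      pow_le_pow_left₀ (norm_nonneg _) (hclose i).le 2
    have h1 : (K i j - Kbar i j) ^ 2
        = (k (x i) (x j) - k (xbar i) (xbar j)) ^ 2 / (n * n) := by
      rw [hKdef, hKbardef, div_sub_div_same, div_pow]
      ring
    rw [h1]
    have h2 : (k (x i) (x j) - k (xbar i) (xbar j)) ^ 2 ≤ 2 * C * ε ^ 2 := by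
      refine (hprof (x i) (x j) (xbar i) (xbar j)).trans ?_
      have hi := hsq i
      have hj := hsq j
      nlinarith
    have hpos : (0:ℝ) < (n:ℝ) * n := by positivity
    exact div_le_div_of_nonneg_right h2 hpos.le
  calc ∑ i, ∑ j, (K i j - Kbar i j) ^ 2
      ≤ ∑ _i : Fin n, ∑ _j : Fin n, 2 * C * ε ^ 2 / (n * n) :=
        Finset.sum_le_sum fun i _ => Finset.sum_le_sum fun j _ => hterm i j
    _ = 2 * C * ε ^ 2 := by
        simp only [Finset.sum_const, Finset.card_univ, Fintype.card_fin, nsmul_eq_mul]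
        have hne : (n:ℝ) ≠ 0 := ne_of_gt hnR
        field_simp
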